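/- The power sum p_Λ is upper triangular in the monomial basis with respect to the weight ordering: p_Λ = a_Λ m_Λ + Σ_{Γ > Λ} a_{Λ,Γ} m_Γ, where a_Λ = Π (over maximal runs of equal parts) n_Λ(Λᵢ)! , the product of factorials of the multiplicities of the distinct parts of Λ. -/

import Mathlib

/-!
Write `a_Λ m_Λ` as the sum of `[φ;θ]_Λ x^Λ` over the injective assignments of variables to
the parts of `Λ`. Multiplying it by a generator `p_q` either puts `q` on a fresh variable,
giving `a_{qΛ} m_{qΛ}`, or on a variable already carrying a part of `Λ`, which merges the two
parts into one whose weight is the sum of theirs. Reordering parts costs only a sign (and kills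
the term when an odd part repeats), and neither sorting nor merging can lower a partial sum of
weights, while merging raises the first one. By induction on the number of parts,
`p_Λ - a_Λ m_Λ` is therefore an integral combination of the `a_Γ m_Γ` with `Γ > Λ`.
-/

noncomputable section

/-- A part of an `N=2` superpartition: plain, overlined, underlined or bilined. -/
inductive SPart where
  | plain (a : ℕ)
  | bar (a : ℕ)
  | und (a : ℕ)
  | bil (a : ℕ)
deriving DecidableEq

namespace SPart

/-- The numerical value of a part. -/
def value : SPart → ℕ
  | .plain a => a | .bar a => a | .und a => a | .bil a => a

/-- The rank used to order parts of equal value: bilined ≻ overlined ≻ underlined ≻ plain. -/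
def rank : SPart → ℕ
  | .plain _ => 0 | .und _ => 1 | .bar _ => 2 | .bil _ => 3

/-- The weight of a part: `w(a) = a`, `w(ā) = w(a̲) = a + 1/2`, `w(a̿) = a + 1`. -/
def weight : SPart → ℚ
  | .plain a => a
  | .bar a => a + 1/2
  | .und a => a + 1/2
  | .bil a => a + 1

end SPart

/-- A list of parts is a genuine `N=2` superpartition when it is sorted (decreasing values,
ties broken as bilined ≻ overlined ≻ underlined ≻ plain), its overlined parts are distinct,
its underlined parts are distinct, and it contains no plain zero part. -/
def IsSPar (L : List SPart) : Prop :=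
  L.Pairwise (fun p q => q.value < p.value ∨ (p.value = q.value ∧ q.rank ≤ p.rank)) ∧
    (∀ a, L.count (SPart.bar a) ≤ 1) ∧ (∀ a, L.count (SPart.und a) ≤ 1) ∧
    SPart.plain 0 ∉ L

/-- Partial sums of weights, and the weight ordering on superpartitions. -/
def wPartial (L : List SPart) (n : ℕ) : ℚ := ((L.take n).map SPart.weight).sum

def wLt (Λ Γ : List SPart) : Prop :=
  (∀ n, wPartial Λ n ≤ wPartial Γ n) ∧ ∃ n, wPartial Λ n < wPartial Γ n

/-- The coefficient ring: exterior algebra on the two odd families `φᵢ, θᵢ`. -/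
abbrev OddAlg (N : ℕ) : Type := ExteriorAlgebra ℚ ((Bool × Fin N) → ℚ)

def φGen (N : ℕ) (i : Fin N) : OddAlg N := ExteriorAlgebra.ι ℚ (Pi.single (false, i) (1 : ℚ))
def θGen (N : ℕ) (i : Fin N) : OddAlg N := ExteriorAlgebra.ι ℚ (Pi.single (true, i) (1 : ℚ))

/-- The ring of `N=2` superpolynomial-valued series in `N` commuting variables. -/
abbrev SRing (N : ℕ) : Type := MvPowerSeries (Fin N) (OddAlg N)

def cst (N : ℕ) : OddAlg N →+* SRing N := MvPowerSeries.C

/-- The factor `φᵢ^{ε̄} θᵢ^{ε̲} xᵢ^{|Λₖ|}` contributed by a part assigned to variable `i`. -/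
def factor (N : ℕ) : SPart → Fin N → SRing N
  | .plain a, i => MvPowerSeries.X i ^ a
  | .bar a, i => cst N (φGen N i) * MvPowerSeries.X i ^ a
  | .und a, i => cst N (θGen N i) * MvPowerSeries.X i ^ a
  | .bil a, i => cst N (φGen N i * θGen N i) * MvPowerSeries.X i ^ a

/-- The multiplicity factor `a_Λ = Π n_Λ(Λᵢ)!` (product of factorials of the multiplicities
of the distinct parts). -/
def aFac (L : List SPart) : ℕ := ∏ p ∈ L.toFinset, Nat.factorial (L.count p)

/-- The monomial symmetric superfunction `m_Λ`: the sum over all distinct permutations of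
`[φ;θ]_Λ x^Λ`, realized as `a_Λ⁻¹` times the sum over all injective assignments of variables
to the parts of `Λ`. -/
def mono (N : ℕ) (L : List SPart) : SRing N :=
  ((aFac L : ℚ))⁻¹ •
    ∑ f : Fin L.length ↪ Fin N,
      ((List.finRange L.length).map (fun i => factor N (L.get i) (f i))).prod

/-- The one-part power-sum generators `pₙ = m₍ₙ₎`, `p̄ₙ = m₍ₙ̄₎`, `p̲ₙ = m₍ₙ̲₎`,
`p̿ₙ = m₍ₙ̿₎`. -/
def pGen (N : ℕ) (p : SPart) : SRing N := ∑ i : Fin N, factor N p i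

/-- The multiplicative power sum `p_Λ` (ordered product over the parts of `Λ`). -/
def pProd (N : ℕ) (L : List SPart) : SRing N := (L.map (pGen N)).prod

namespace SPart

def Precedes (p q : SPart) : Prop := q.value < p.value ∨ (p.value = q.value ∧ q.rank ≤ p.rank)

instance : DecidableRel Precedes := fun p q => by unfold Precedes; infer_instance

instance : Std.Total Precedes where
  total p q := by unfold Precedes; omega

instance : IsTrans SPart Precedes where
  trans p q r := by unfold Precedes; omega

theorem weight_nonneg (p : SPart) : 0 ≤ p.weight := by
  cases p <;> simp only [weight] <;> positivity

theorem weight_pos {p : SPart} (hp : p ≠ plain 0) : 0 < p.weight := by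
  cases p with
  | plain a => simpa [weight, Nat.pos_iff_ne_zero] using hp
  | _ => simp only [weight]; positivity

theorem weight_le_of_precedes {p q : SPart} (h : Precedes p q) : q.weight ≤ p.weight := by
  rcases h with h | ⟨hv, hr⟩
  · have hq : q.weight ≤ q.value + 1 := by cases q <;> norm_num [weight, value]
    have hp : (p.value : ℚ) ≤ p.weight := by cases p <;> simp [weight, value]
    have hv : (q.value : ℚ) + 1 ≤ p.value := by exact_mod_cast h
    linarith
  · cases p <;> cases q <;> simp_all [rank, value, weight] <;> linarith

/-- Whether the part carries exactly one odd generator (`φ` or `θ`). -/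
def IsOdd : SPart → Prop
  | bar _ | und _ => True
  | _ => False

instance : DecidablePred IsOdd := fun p => by cases p <;> unfold IsOdd <;> infer_instance

def swapSign (p q : SPart) : ℤ := if p.IsOdd ∧ q.IsOdd then -1 else 1

/-- The part carried by a variable to which both `p` and `q` are assigned; `mergeSign p q` is
the sign of `[φ;θ]_p [φ;θ]_q` relative to it, and `0` when that product vanishes. -/
def merge : SPart → SPart → SPart
  | plain a, plain b => plain (a + b)
  | plain a, bar b | bar a, plain b => bar (a + b)
  | plain a, und b | und a, plain b => und (a + b)
  | plain a, bil b | bil a, plain b | bar a, und b | und a, bar b => bil (a + b)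
  | _, _ => plain 0

def mergeSign : SPart → SPart → ℤ
  | plain _, _ | bar _, plain _ | bar _, und _ | und _, plain _ | bil _, plain _ => 1
  | und _, bar _ => -1
  | _, _ => 0

theorem value_merge {p q : SPart} (h : mergeSign p q ≠ 0) :
    (merge p q).value = p.value + q.value := by
  cases p <;> cases q <;> simp_all [mergeSign, merge, value]

theorem weight_merge {p q : SPart} (h : mergeSign p q ≠ 0) :
    (merge p q).weight = p.weight + q.weight := by
  cases p <;> cases q <;> simp_all [mergeSign, merge, weight] <;> ring

theorem merge_ne_plain_zero {p q : SPart} (h : mergeSign p q ≠ 0) (hq : q ≠ plain 0) :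
    merge p q ≠ plain 0 := by
  cases p <;> cases q <;> simp_all [mergeSign, merge]

end SPart

section OddFactors

open ExteriorAlgebra SPart

variable {R M : Type*} [CommRing R] [AddCommGroup M] [Module R M]

theorem ExteriorAlgebra.ι_mul_ι_anticomm (v w : M) : ι R v * ι R w = -(ι R w * ι R v) :=
  eq_neg_of_add_eq_zero_left (ι_add_mul_swap v w)

theorem ExteriorAlgebra.ι_mul_ι_mul_ι_comm (v a b : M) :
    ι R v * (ι R a * ι R b) = ι R a * ι R b * ι R v := by
  rw [← mul_assoc, ι_mul_ι_anticomm v a, neg_mul, mul_assoc, ι_mul_ι_anticomm v b, mul_neg,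
    neg_neg, ← mul_assoc]

theorem ExteriorAlgebra.ι_mul_ι_commute_ι_mul_ι (a b c d : M) :
    Commute (ι R a * ι R b) (ι R c * ι R d) := by
  simp only [Commute, SemiconjBy, mul_assoc, ι_mul_ι_mul_ι_comm b c d]
  simp only [← mul_assoc, ι_mul_ι_mul_ι_comm a c d]

variable {N : ℕ}

def oddFactor : SPart → Fin N → OddAlg N
  | plain _, _ => 1
  | bar _, i => φGen N i
  | und _, i => θGen N i
  | bil _, i => φGen N i * θGen N i

theorem factor_eq_cst_mul (p : SPart) (i : Fin N) :
    factor N p i = cst N (oddFactor p i) * MvPowerSeries.X i ^ p.value := by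
  cases p <;> simp [factor, oddFactor, value]

theorem oddFactor_mul_comm (p q : SPart) (i j : Fin N) :
    oddFactor p i * oddFactor q j = swapSign p q • (oddFactor q j * oddFactor p i) := by
  cases p <;> cases q <;> simp only [oddFactor, swapSign, IsOdd, φGen, θGen] <;> norm_num <;>
    first
      | exact ι_mul_ι_anticomm _ _
      | exact ι_mul_ι_mul_ι_comm _ _ _
      | exact (ι_mul_ι_mul_ι_comm _ _ _).symm
      | exact ι_mul_ι_commute_ι_mul_ι _ _ _ _

theorem oddFactor_mul_self (p q : SPart) (i : Fin N) :
    oddFactor p i * oddFactor q i = mergeSign p q • oddFactor (merge p q) i := by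
  cases p <;> cases q <;>
    simp only [oddFactor, merge, mergeSign, one_mul, mul_one, one_smul, neg_smul, zero_smul,
      φGen, θGen] <;>
    first
      | rfl
      | exact ι_sq_zero _
      | exact ι_mul_ι_anticomm _ _
      | rw [← mul_assoc, ι_sq_zero, zero_mul]
      | rw [mul_assoc, ι_sq_zero, mul_zero]
      | rw [ι_mul_ι_mul_ι_comm, mul_assoc, ι_sq_zero, mul_zero]
      | rw [← ι_mul_ι_mul_ι_comm, ← mul_assoc, ι_sq_zero, zero_mul]
      | rw [← mul_assoc, ← ι_mul_ι_mul_ι_comm, ← mul_assoc, ι_sq_zero, zero_mul, zero_mul]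

theorem cst_mul_X_pow_mul_cst_mul_X_pow (α β : OddAlg N) (i j : Fin N) (a b : ℕ) :
    cst N α * MvPowerSeries.X i ^ a * (cst N β * MvPowerSeries.X j ^ b)
      = cst N (α * β) * (MvPowerSeries.X i ^ a * MvPowerSeries.X j ^ b) := by
  rw [map_mul, mul_assoc, ← mul_assoc (MvPowerSeries.X i ^ a),
    ((MvPowerSeries.commute_X (cst N β) i).pow_right a).eq.symm, mul_assoc, mul_assoc]

theorem factor_mul_comm (p q : SPart) (i j : Fin N) :
    factor N p i * factor N q j = swapSign p q • (factor N q j * factor N p i) := by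
  rw [factor_eq_cst_mul p i, factor_eq_cst_mul q j, cst_mul_X_pow_mul_cst_mul_X_pow,
    cst_mul_X_pow_mul_cst_mul_X_pow, oddFactor_mul_comm, map_zsmul, smul_mul_assoc,
    ((MvPowerSeries.commute_X _ i).symm.pow_pow _ _).eq]

theorem factor_mul_self (p q : SPart) (i : Fin N) :
    factor N p i * factor N q i = mergeSign p q • factor N (merge p q) i := by
  rw [factor_eq_cst_mul p i, factor_eq_cst_mul q i, cst_mul_X_pow_mul_cst_mul_X_pow, ← pow_add,
    oddFactor_mul_self, map_zsmul, smul_mul_assoc]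
  rcases eq_or_ne (mergeSign p q) 0 with h | h
  · rw [h, zero_smul, zero_smul]
  · rw [factor_eq_cst_mul (merge p q) i, value_merge h]

end OddFactors

section AugmentedMonomial

open SPart

variable {N : ℕ}

/-- `augMono N Λ u` sums `[φ;θ]_Λ x^Λ` over the injective assignments of variables outside `u`
to the parts of `Λ`, so that `augMono N Λ ∅ = a_Λ m_Λ`. -/
def augMono (N : ℕ) : List SPart → Finset (Fin N) → SRing N
  | [], _ => 1
  | p :: M, u => ∑ i ∈ uᶜ, factor N p i * augMono N M (insert i u)

theorem augMono_cons (p : SPart) (M : List SPart) (u : Finset (Fin N)) :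
    augMono N (p :: M) u = ∑ i ∈ uᶜ, factor N p i * augMono N M (insert i u) := rfl

theorem augMono_cons_cons (p q : SPart) (B : List SPart) (u : Finset (Fin N)) :
    augMono N (p :: q :: B) u
      = ∑ i ∈ uᶜ, ∑ j ∈ uᶜ.erase i,
          factor N p i * (factor N q j * augMono N B (insert j (insert i u))) := by
  simp only [augMono_cons, Finset.mul_sum, Finset.compl_insert]

theorem augMono_swap (p q : SPart) (B : List SPart) (u : Finset (Fin N)) :
    augMono N (p :: q :: B) u = swapSign p q • augMono N (q :: p :: B) u := by
  rw [augMono_cons_cons, augMono_cons_cons, Finset.smul_sum,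
    Finset.sum_comm' (t' := uᶜ) (s' := fun j => uᶜ.erase j) (by aesop)]
  refine Finset.sum_congr rfl fun j _ => ?_
  rw [Finset.smul_sum]
  refine Finset.sum_congr rfl fun i _ => ?_
  rw [← mul_assoc, factor_mul_comm p q, smul_mul_assoc, mul_assoc, Finset.insert_comm]

theorem augMono_perm {X Y : List SPart} (h : X.Perm Y) :
    ∃ z : ℤ, ∀ u : Finset (Fin N), augMono N X u = z • augMono N Y u := by
  induction h with
  | nil => exact ⟨1, fun u => (one_smul ℤ _).symm⟩
  | cons p _ ih =>
    obtain ⟨z, hz⟩ := ih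
    refine ⟨z, fun u => ?_⟩
    simp only [augMono_cons, hz, mul_smul_comm, Finset.smul_sum]
  | swap p q B => exact ⟨swapSign q p, augMono_swap q p B⟩
  | trans _ _ ih₁ ih₂ =>
    obtain ⟨z₁, hz₁⟩ := ih₁
    obtain ⟨z₂, hz₂⟩ := ih₂
    exact ⟨z₁ * z₂, fun u => by rw [hz₁, hz₂, smul_smul]⟩

theorem augMono_eq_zero_of_isOdd {p : SPart} (hp : p.IsOdd) {X : List SPart}
    (hX : 2 ≤ X.count p) (u : Finset (Fin N)) : augMono N X u = 0 := by
  have hpX : p ∈ X := List.count_pos_iff.mp (by omega)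
  have hpX' : p ∈ X.erase p := List.count_pos_iff.mp (by rw [List.count_erase_self]; omega)
  obtain ⟨z, hz⟩ := augMono_perm (N := N) ((List.perm_cons_erase hpX).trans
    ((List.perm_cons_erase hpX').cons p))
  have := IsAddTorsionFree.of_module_rat (SRing N)
  have hswap := augMono_swap (N := N) p p ((X.erase p).erase p) u
  rw [swapSign, if_pos ⟨hp, hp⟩, neg_one_zsmul, self_eq_neg] at hswap
  rw [hz, hswap, smul_zero]

theorem augMono_eq_sum_embedding (L : List SPart) (u : Finset (Fin N)) :
    augMono N L u = ∑ f : Fin L.length ↪ Fin N with ∀ k, f k ∉ u,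
      ((List.finRange L.length).map fun k => factor N L[k] (f k)).prod := by
  induction L generalizing u with
  | nil => simp [augMono]
  | cons p M ih =>
    simp only [augMono_cons, ih, Finset.mul_sum]
    rw [Finset.sum_sigma']
    symm
    -- `f ↦ (f 0, f ∘ succ)`: an embedding avoiding `u` is a value `i ∉ u` at `0` followed by an
    -- embedding avoiding `insert i u`
    refine Finset.sum_bij' (fun f _ => ⟨f 0, (Equiv.embeddingFinSucc _ _ f).1⟩)
      (fun x hx => (Equiv.embeddingFinSucc _ _).symm ⟨x.2, x.1, ?_⟩) ?_ ?_ ?_ ?_ ?_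
    · simp only [Finset.mem_sigma, Finset.mem_filter, Finset.mem_univ, true_and,
        Finset.mem_insert, not_or] at hx
      rintro ⟨k, hk⟩
      exact (hx.2 k).1 hk
    · intro f hf
      simp only [Finset.mem_filter, Finset.mem_univ, true_and] at hf
      simp only [Finset.mem_sigma, Finset.mem_compl, Finset.mem_filter, Finset.mem_univ,
        true_and, Finset.mem_insert, not_or, Equiv.embeddingFinSucc_fst, Function.comp_apply]
      exact ⟨hf 0, fun k => ⟨f.injective.ne (Fin.succ_ne_zero k), hf k.succ⟩⟩
    · intro x hx
      simp only [Finset.mem_sigma, Finset.mem_compl, Finset.mem_filter, Finset.mem_univ,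
        true_and, Finset.mem_insert, not_or] at hx
      simp only [Finset.mem_filter, Finset.mem_univ, true_and, Equiv.coe_embeddingFinSucc_symm]
      exact Fin.cases hx.1 fun k => (hx.2 k).2
    · intro f _
      exact (Equiv.symm_apply_eq _).2 rfl
    · intro x _
      simp only [Equiv.apply_symm_apply, Equiv.coe_embeddingFinSucc_symm, Fin.cons_zero]
    · intro f _
      change ((List.finRange (M.length + 1)).map fun k => factor N (p :: M)[k] (f k)).prod = _
      rw [List.finRange_succ, List.map_cons, List.prod_cons, List.map_map]
      rfl

theorem aFac_ne_zero (L : List SPart) : aFac L ≠ 0 :=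
  Finset.prod_ne_zero_iff.2 fun _ _ => Nat.factorial_ne_zero _

theorem aFac_smul_mono (L : List SPart) : (aFac L : ℚ) • mono N L = augMono N L ∅ := by
  rw [mono, smul_smul, mul_inv_cancel₀ (Nat.cast_ne_zero.2 (aFac_ne_zero L)), one_smul,
    augMono_eq_sum_embedding, Finset.filter_true_of_mem fun f _ k => Finset.notMem_empty (f k)]
  rfl

end AugmentedMonomial

section Multiplication

open SPart

variable {N : ℕ}

def pGenOutside (N : ℕ) (p : SPart) (u : Finset (Fin N)) : SRing N := ∑ i ∈ uᶜ, factor N p i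

theorem pGen_eq_pGenOutside_empty (p : SPart) : pGen N p = pGenOutside N p ∅ := by
  rw [pGen, pGenOutside, Finset.compl_empty]

theorem pGenOutside_eq_factor_add {u : Finset (Fin N)} {j : Fin N} (hj : j ∈ uᶜ) (p : SPart) :
    pGenOutside N p u = factor N p j + pGenOutside N p (insert j u) := by
  rw [pGenOutside, pGenOutside, Finset.compl_insert, Finset.add_sum_erase _ _ hj]

theorem pGenOutside_mul_factor (p q : SPart) (u : Finset (Fin N)) (j : Fin N) :
    pGenOutside N p u * factor N q j = swapSign p q • (factor N q j * pGenOutside N p u) := by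
  rw [pGenOutside, Finset.sum_mul, Finset.mul_sum, Finset.smul_sum]
  exact Finset.sum_congr rfl fun i _ => factor_mul_comm p q i j

/-- The coefficient with which `p` merges into the part `M[k]`: `p` first moves past
`M[0], …, M[k-1]`. -/
def mergeCoef (p : SPart) (M : List SPart) (k : Fin M.length) : ℤ :=
  ((M.take k).map (swapSign p)).prod * mergeSign p M[k]

def mergeAt (p : SPart) (M : List SPart) (k : Fin M.length) : List SPart :=
  M.set k (merge p M[k])

@[simp]
theorem mergeCoef_cons_zero (p q : SPart) (M : List SPart) :
    mergeCoef p (q :: M) 0 = mergeSign p q := by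
  simp [mergeCoef]

@[simp]
theorem mergeCoef_cons_succ (p q : SPart) (M : List SPart) (k : Fin M.length) :
    mergeCoef p (q :: M) k.succ = swapSign p q * mergeCoef p M k := by
  simp [mergeCoef, mul_assoc]

@[simp]
theorem mergeAt_cons_zero (p q : SPart) (M : List SPart) :
    mergeAt p (q :: M) 0 = merge p q :: M := by
  simp [mergeAt]

@[simp]
theorem mergeAt_cons_succ (p q : SPart) (M : List SPart) (k : Fin M.length) :
    mergeAt p (q :: M) k.succ = q :: mergeAt p M k := by
  simp [mergeAt]

theorem pGenOutside_mul_augMono (p : SPart) (M : List SPart) (u : Finset (Fin N)) :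
    pGenOutside N p u * augMono N M u
      = augMono N (p :: M) u + ∑ k, mergeCoef p M k • augMono N (mergeAt p M k) u := by
  induction M generalizing u with
  | nil => simp [augMono, pGenOutside]
  | cons q M ih =>
    have hsame : ∑ j ∈ uᶜ, factor N p j * (factor N q j * augMono N M (insert j u))
        = mergeSign p q • augMono N (merge p q :: M) u := by
      simp only [augMono_cons, Finset.smul_sum, ← mul_assoc, factor_mul_self, smul_mul_assoc]
    have hdistinct : ∑ j ∈ uᶜ, pGenOutside N p (insert j u) *
          (factor N q j * augMono N M (insert j u))
        = augMono N (p :: q :: M) u + ∑ k : Fin M.length,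
            (swapSign p q * mergeCoef p M k) • augMono N (q :: mergeAt p M k) u := by
      calc _ = swapSign p q • ∑ j ∈ uᶜ, factor N q j *
                (pGenOutside N p (insert j u) * augMono N M (insert j u)) := by
            simp only [Finset.smul_sum, ← mul_assoc, pGenOutside_mul_factor, smul_mul_assoc]
        _ = swapSign p q • (augMono N (q :: p :: M) u
              + ∑ k, mergeCoef p M k • augMono N (q :: mergeAt p M k) u) := by
            simp only [ih, mul_add, Finset.sum_add_distrib, Finset.mul_sum, mul_smul_comm,
              augMono_cons, Finset.smul_sum]
            rw [Finset.sum_comm (s := uᶜ)]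
        _ = _ := by simp only [smul_add, ← augMono_swap, Finset.smul_sum, smul_smul]
    calc pGenOutside N p u * augMono N (q :: M) u
        = ∑ j ∈ uᶜ, factor N p j * (factor N q j * augMono N M (insert j u))
          + ∑ j ∈ uᶜ, pGenOutside N p (insert j u) *
              (factor N q j * augMono N M (insert j u)) := by
          rw [augMono_cons, Finset.mul_sum, ← Finset.sum_add_distrib]
          exact Finset.sum_congr rfl fun j hj => by rw [pGenOutside_eq_factor_add hj, add_mul]
      _ = _ := by
          rw [hsame, hdistinct]
          erw [Fin.sum_univ_succ]
          simp only [mergeCoef_cons_zero, mergeCoef_cons_succ, mergeAt_cons_zero,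
            mergeAt_cons_succ]
          abel

end Multiplication

section Sorting

variable {α M : Type*} [AddCommMonoid M] [PartialOrder M] [IsOrderedAddMonoid M]
  (r : α → α → Prop) [DecidableRel r] {f : α → M}

theorem List.sum_take_map_le_orderedInsert (hf : ∀ a b, ¬ r a b → f a ≤ f b) (a : α)
    (l : List α) (n : ℕ) :
    (((a :: l).take n).map f).sum ≤ (((l.orderedInsert r a).take n).map f).sum := by
  induction l generalizing n with
  | nil => rfl
  | cons b l ih =>
    rw [List.orderedInsert_cons]
    split_ifs with h
    · rfl
    rcases n with _ | _ | n
    · rfl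
    · simpa using hf a b h
    · simpa only [List.take_succ_cons, List.map_cons, List.sum_cons, add_left_comm (f a)]
        using add_le_add (le_refl (f b)) (ih (n + 1))

theorem List.sum_take_map_le_insertionSort (hf : ∀ a b, ¬ r a b → f a ≤ f b) (l : List α)
    (n : ℕ) : ((l.take n).map f).sum ≤ (((l.insertionSort r).take n).map f).sum := by
  induction l generalizing n with
  | nil => rfl
  | cons a l ih =>
    refine le_trans ?_ (List.sum_take_map_le_orderedInsert r hf a (l.insertionSort r) n)
    rcases n with _ | n
    · rfl
    · simpa only [List.take_succ_cons, List.map_cons, List.sum_cons]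
        using add_le_add (le_refl (f a)) (ih n)

end Sorting

section WeightOrder

open SPart

def wLe (Λ Γ : List SPart) : Prop := ∀ n, wPartial Λ n ≤ wPartial Γ n

theorem wLe.trans {Λ Γ Δ : List SPart} (h₁ : wLe Λ Γ) (h₂ : wLe Γ Δ) : wLe Λ Δ :=
  fun n => (h₁ n).trans (h₂ n)

theorem wLt_of_wLe_of_wLt {Λ Γ Δ : List SPart} (h₁ : wLe Λ Γ) (h₂ : wLt Γ Δ) :
    wLt Λ Δ :=
  ⟨wLe.trans h₁ h₂.1, h₂.2.imp fun n hn => (h₁ n).trans_lt hn⟩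

theorem wLt_of_wLt_of_wLe {Λ Γ Δ : List SPart} (h₁ : wLt Λ Γ) (h₂ : wLe Γ Δ) :
    wLt Λ Δ :=
  ⟨wLe.trans h₁.1 h₂, h₁.2.imp fun n hn => hn.trans_le (h₂ n)⟩

@[simp]
theorem wPartial_zero (L : List SPart) : wPartial L 0 = 0 := by
  simp [wPartial]

@[simp]
theorem wPartial_cons_succ (p : SPart) (L : List SPart) (n : ℕ) :
    wPartial (p :: L) (n + 1) = p.weight + wPartial L n := by
  simp [wPartial]

theorem wPartial_mono (L : List SPart) : Monotone (wPartial L) := fun _ _ hmn =>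
  ((List.take_prefix_take_left hmn).sublist.map _).sum_le_sum
    fun _ hw => by obtain ⟨p, -, rfl⟩ := List.mem_map.1 hw; exact weight_nonneg p

theorem wLe_cons {Λ Γ : List SPart} (h : wLe Λ Γ) (p : SPart) : wLe (p :: Λ) (p :: Γ)
  | 0 => le_rfl
  | n + 1 => by simpa using h n

theorem wLt_cons {Λ Γ : List SPart} (h : wLt Λ Γ) (p : SPart) : wLt (p :: Λ) (p :: Γ) :=
  let ⟨n, hn⟩ := h.2
  ⟨wLe_cons h.1 p, n + 1, by simpa using hn⟩

theorem wLe_insertionSort (L : List SPart) : wLe L (L.insertionSort Precedes) :=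
  List.sum_take_map_le_insertionSort Precedes
    (fun p q h => weight_le_of_precedes ((total_of Precedes p q).resolve_left h)) L

theorem wPartial_le_weight_add_eraseIdx (L : List SPart) {k : ℕ} (hk : k < L.length) (n : ℕ) :
    wPartial L n ≤ L[k].weight + wPartial (L.eraseIdx k) n := by
  induction L generalizing k n with
  | nil => simp at hk
  | cons p L ih =>
    rcases n with _ | n
    · simpa using weight_nonneg _
    rcases k with _ | k
    · simpa using wPartial_mono L n.le_succ
    · simpa [add_left_comm] using ih (Nat.lt_of_succ_lt_succ hk) n

theorem wLt_merge_cons_eraseIdx {p : SPart} {X : List SPart} {k : ℕ} (hk : k < X.length)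
    (hpq : mergeSign p X[k] ≠ 0) (hq : X[k] ≠ plain 0) :
    wLt (p :: X) (merge p X[k] :: X.eraseIdx k) := by
  refine ⟨fun n => ?_, 1, ?_⟩
  · rcases n with _ | n
    · rfl
    · simpa [weight_merge hpq, add_assoc] using wPartial_le_weight_add_eraseIdx X hk n
  · simpa [weight_merge hpq] using weight_pos hq

end WeightOrder

section UpperSpan

open SPart

variable {N : ℕ}

theorem IsSPar.of_cons {p : SPart} {L : List SPart} (h : IsSPar (p :: L)) : IsSPar L :=
  ⟨(List.pairwise_cons.1 h.1).2, fun a => List.count_le_count_cons.trans (h.2.1 a),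
    fun a => List.count_le_count_cons.trans (h.2.2.1 a), fun h0 => h.2.2.2 (.tail p h0)⟩

theorem IsSPar.head_ne_plain_zero {p : SPart} {L : List SPart} (h : IsSPar (p :: L)) :
    p ≠ plain 0 :=
  fun hp => h.2.2.2 (hp ▸ List.mem_cons_self)

theorem exists_isOdd_two_le_count_of_not_isSPar {L : List SPart} (hs : L.Pairwise Precedes)
    (h0 : plain 0 ∉ L) (h : ¬ IsSPar L) : ∃ p : SPart, p.IsOdd ∧ 2 ≤ L.count p := by
  by_contra! hc
  exact h ⟨hs, fun a => Nat.le_of_lt_succ (hc (bar a) trivial),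
    fun a => Nat.le_of_lt_succ (hc (und a) trivial), h0⟩

def upperSpan (N : ℕ) (L : List SPart) : Submodule ℤ (SRing N) :=
  Submodule.span ℤ ((augMono N · ∅) '' {Γ | IsSPar Γ ∧ wLt L Γ})

/-- Sorting `X` only changes `augMono N X` by a sign, or kills it when the sorted list repeats
an odd part. -/
theorem augMono_mem_upperSpan {L X Y : List SPart} (h0 : plain 0 ∉ X) (hXY : X.Perm Y)
    (hLY : wLt L Y) : augMono N X ∅ ∈ upperSpan N L := by
  set Γ := Y.insertionSort Precedes
  have hXΓ : X.Perm Γ := hXY.trans (List.perm_insertionSort _ Y).symm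
  by_cases hΓ : IsSPar Γ
  · obtain ⟨z, hz⟩ := augMono_perm (N := N) hXΓ
    rw [hz]
    exact Submodule.smul_mem _ z <| Submodule.subset_span
      ⟨Γ, ⟨hΓ, wLt_of_wLt_of_wLe hLY (wLe_insertionSort Y)⟩, rfl⟩
  · obtain ⟨p, hp, hcount⟩ := exists_isOdd_two_le_count_of_not_isSPar
      (List.pairwise_insertionSort _ Y) (fun h => h0 (hXΓ.symm.subset h)) hΓ
    rw [augMono_eq_zero_of_isOdd hp (hXΓ.count_eq p ▸ hcount)]
    exact zero_mem _

theorem mergeCoef_smul_augMono_mem_upperSpan {L X : List SPart} {p : SPart}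
    (hX0 : plain 0 ∉ X) (hLX : wLe L (p :: X)) (k : Fin X.length) :
    mergeCoef p X k • augMono N (mergeAt p X k) ∅ ∈ upperSpan N L := by
  by_cases hpq : mergeSign p X[k] = 0
  · rw [mergeCoef, hpq, mul_zero, zero_smul]
    exact zero_mem _
  have hq0 : X[k] ≠ plain 0 := fun h => hX0 (h ▸ List.getElem_mem _)
  have hm0 : merge p X[k] ≠ plain 0 := merge_ne_plain_zero hpq hq0
  refine Submodule.smul_mem _ _ (augMono_mem_upperSpan ?_ (List.set_perm_cons_eraseIdx k.2 _)
    (wLt_of_wLe_of_wLt hLX (wLt_merge_cons_eraseIdx k.2 hpq hq0)))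
  exact fun h => (List.mem_or_eq_of_mem_set h).elim hX0 hm0.symm

theorem pGen_mul_mem_upperSpan {p : SPart} (hp : p ≠ plain 0) {M : List SPart} {x : SRing N}
    (hx : x ∈ upperSpan N M) : pGen N p * x ∈ upperSpan N (p :: M) := by
  induction hx using Submodule.span_induction with
  | mem x hx =>
    obtain ⟨Γ, ⟨hΓ, hMΓ⟩, rfl⟩ := hx
    rw [pGen_eq_pGenOutside_empty, pGenOutside_mul_augMono]
    refine add_mem ?_ (Submodule.sum_mem _ fun k _ =>
      mergeCoef_smul_augMono_mem_upperSpan hΓ.2.2.2 (wLe_cons hMΓ.1 p) k)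
    exact augMono_mem_upperSpan (List.mem_cons.not.2 (not_or.2 ⟨hp.symm, hΓ.2.2.2⟩)) (.refl _)
      (wLt_cons hMΓ p)
  | zero => simp
  | add x y _ _ hx hy => simpa [mul_add] using add_mem hx hy
  | smul a x _ hx =>
    rw [mul_smul_comm]
    exact Submodule.smul_mem _ a hx

theorem pProd_sub_augMono_mem_upperSpan {L : List SPart} (hL : IsSPar L) :
    pProd N L - augMono N L ∅ ∈ upperSpan N L := by
  induction L with
  | nil => simp [pProd, augMono]
  | cons p M ih =>
    have hexpand : pProd N (p :: M) - augMono N (p :: M) ∅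
        = pGen N p * (pProd N M - augMono N M ∅)
          + ∑ k, mergeCoef p M k • augMono N (mergeAt p M k) ∅ := by
      rw [pProd, List.map_cons, List.prod_cons, mul_sub, pGen_eq_pGenOutside_empty,
        pGenOutside_mul_augMono, pProd]
      abel
    rw [hexpand]
    exact add_mem (pGen_mul_mem_upperSpan hL.head_ne_plain_zero (ih hL.of_cons))
      (Submodule.sum_mem _ fun k _ =>
        mergeCoef_smul_augMono_mem_upperSpan hL.of_cons.2.2.2 (fun _ => le_rfl) k)

theorem upperSpan_le_span_mono (L : List SPart) :
    upperSpan N L ≤ Submodule.span ℤ (mono N '' {Γ | IsSPar Γ ∧ wLt L Γ}) := by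
  refine Submodule.span_le.2 ?_
  rintro _ ⟨Γ, hΓ, rfl⟩
  dsimp only
  rw [← aFac_smul_mono, Nat.cast_smul_eq_nsmul]
  exact nsmul_mem (Submodule.subset_span (Set.mem_image_of_mem _ hΓ)) _

end UpperSpan

/-- Upper triangularity of the power sums in the monomial basis with respect to the weight
ordering: `p_Λ = a_Λ m_Λ + Σ_{Γ > Λ} a_{Λ,Γ} m_Γ` with integer coefficients `a_{Λ,Γ}` and
`a_Λ = Π n_Λ(Λᵢ)!`. -/
theorem pProd_upper_triangular (N : ℕ) (L : List SPart) (hL : IsSPar L) :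
    ∃ c : List SPart →₀ ℤ,
      (∀ Γ ∈ c.support, IsSPar Γ ∧ wLt L Γ) ∧
      pProd N L = (aFac L : ℚ) • mono N L + c.sum (fun Γ z => z • mono N Γ) := by
  obtain ⟨c, hc, hsum⟩ := (Finsupp.mem_span_image_iff_linearCombination ℤ).1
    (upperSpan_le_span_mono L (pProd_sub_augMono_mem_upperSpan (N := N) hL))
  refine ⟨c, fun Γ hΓ => hc hΓ, ?_⟩
  rw [← Finsupp.linearCombination_apply, hsum, aFac_smul_mono, add_sub_cancel]

end
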